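/- Suppose a = 0 and b > 0. Then A(x) = 9b(b²x⁴ + 4bx² − 1) for all x, and A(x) ≤ 0 if and only if x² ≤ (√5 − 2)/b. Consequently, if in addition c = 0, then M(x,y) ≤ 0 for all (x,y) with |x| ≤ √((√5 − 2)/b). -/

import Mathlib

open Set

/-- `F(x) = x²/2 + a·x³/3 + b·x⁴/4`. -/
noncomputable def Fq (a b : ℝ) : ℝ → ℝ := fun x => x ^ 2 / 2 + a * x ^ 3 / 3 + b * x ^ 4 / 4

/-- `G(y) = y²/2 + c·y⁴/4`. -/
noncomputable def Gq (c : ℝ) : ℝ → ℝ := fun y => y ^ 2 / 2 + c * y ^ 4 / 4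

/-- The function `M(x,y)` built from `F` and `G`. -/
noncomputable def Mfun (F G : ℝ → ℝ) (x y : ℝ) : ℝ :=
  (6 * F x * (deriv (deriv F) x) ^ 2 - 3 * (deriv F x) ^ 2 * deriv (deriv F) x
      - 2 * F x * deriv F x * deriv (deriv (deriv F)) x) * G y * (deriv G y) ^ 2
    + F x * (deriv F x) ^ 2 * deriv (deriv F) x
      * ((deriv G y) ^ 2 - 2 * G y * deriv (deriv G) y)

/-- The function `M(x,y)` for the quartic Hamiltonian with parameters `a`, `b`, `c`. -/
noncomputable def Mq (a b c : ℝ) (x y : ℝ) : ℝ := Mfun (Fq a b) (Gq c) x y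

/-- The polynomial `A(x)`. -/
def Apoly (a b x : ℝ) : ℝ :=
  10 * a ^ 2 - 9 * b + a * (30 * b + 4 * a ^ 2) * x + b * (36 * b + 16 * a ^ 2) * x ^ 2
    + 24 * a * b ^ 2 * x ^ 3 + 9 * b ^ 3 * x ^ 4

/-- The polynomial `B(x)`. -/
def Bpoly (a b x : ℝ) : ℝ :=
  (6 + 4 * a * x + 3 * b * x ^ 2) * (1 + a * x + b * x ^ 2) ^ 2 * (1 + 2 * a * x + 3 * b * x ^ 2)

/-- The polynomial `P(y)`. -/
def Ppoly (c y : ℝ) : ℝ := (1 + c * y ^ 2) ^ 2 * (2 + c * y ^ 2)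

/-- The polynomial `Q(y)`. -/
def Qpoly (c y : ℝ) : ℝ := c * (3 + c * y ^ 2)

/-!
With `F' = x(1 + ax + bx²)` and `G' = y(1 + cy²)` one finds `M = x⁴y⁴(A·P − B·Q)/24`, and `Q = 0`,
`P = 2` when `c = 0`, so `M` has the sign of `A`. For `a = 0`, `A = 9b(t² + 4t − 1)` with `t = bx²`,
whose positive root is `√5 − 2`.
-/

lemma deriv_Fq (a b : ℝ) : deriv (Fq a b) = fun x => x + a * x ^ 2 + b * x ^ 3 := by
  funext x
  refine HasDerivAt.deriv ?_
  have := (((hasDerivAt_pow 2 x).div_const 2).add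
    (((hasDerivAt_pow 3 x).const_mul a).div_const 3)).add
    (((hasDerivAt_pow 4 x).const_mul b).div_const 4)
  exact this.congr_deriv (by push_cast; ring)

lemma deriv_deriv_Fq (a b : ℝ) :
    deriv (deriv (Fq a b)) = fun x => 1 + 2 * a * x + 3 * b * x ^ 2 := by
  rw [deriv_Fq]
  funext x
  refine HasDerivAt.deriv ?_
  have := ((hasDerivAt_id x).add ((hasDerivAt_pow 2 x).const_mul a)).add
    ((hasDerivAt_pow 3 x).const_mul b)
  exact this.congr_deriv (by push_cast; ring)

lemma deriv_deriv_deriv_Fq (a b : ℝ) :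
    deriv (deriv (deriv (Fq a b))) = fun x => 2 * a + 6 * b * x := by
  rw [deriv_deriv_Fq]
  funext x
  refine HasDerivAt.deriv ?_
  have := ((hasDerivAt_const x 1).add ((hasDerivAt_id x).const_mul (2 * a))).add
    ((hasDerivAt_pow 2 x).const_mul (3 * b))
  exact this.congr_deriv (by push_cast; ring)

lemma deriv_Gq (c : ℝ) : deriv (Gq c) = fun y => y + c * y ^ 3 := by
  funext y
  refine HasDerivAt.deriv ?_
  have := ((hasDerivAt_pow 2 y).div_const 2).add
    (((hasDerivAt_pow 4 y).const_mul c).div_const 4)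
  exact this.congr_deriv (by push_cast; ring)

lemma deriv_deriv_Gq (c : ℝ) : deriv (deriv (Gq c)) = fun y => 1 + 3 * c * y ^ 2 := by
  rw [deriv_Gq]
  funext y
  refine HasDerivAt.deriv ?_
  have := (hasDerivAt_id y).add ((hasDerivAt_pow 3 y).const_mul c)
  exact this.congr_deriv (by push_cast; ring)

lemma Mq_eq_Apoly_Ppoly_sub_Bpoly_Qpoly (a b c x y : ℝ) :
    Mq a b c x y = x ^ 4 * y ^ 4 * (Apoly a b x * Ppoly c y - Bpoly a b x * Qpoly c y) / 24 := by
  unfold Mq Mfun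
  rw [deriv_deriv_deriv_Fq, deriv_deriv_Fq, deriv_Fq, deriv_deriv_Gq, deriv_Gq]
  unfold Fq Gq Apoly Bpoly Ppoly Qpoly
  ring

lemma Mq_nonpos_of_Apoly_nonpos {a b x : ℝ} (h : Apoly a b x ≤ 0) (y : ℝ) : Mq a b 0 x y ≤ 0 := by
  have hM : Mq a b 0 x y = x ^ 4 * y ^ 4 * Apoly a b x / 12 := by
    rw [Mq_eq_Apoly_Ppoly_sub_Bpoly_Qpoly]; unfold Ppoly Qpoly; ring
  rw [hM]
  exact div_nonpos_of_nonpos_of_nonneg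
    (mul_nonpos_of_nonneg_of_nonpos (by positivity) h) (by norm_num)

lemma Apoly_zero_left (b x : ℝ) : Apoly 0 b x = 9 * b * (b ^ 2 * x ^ 4 + 4 * b * x ^ 2 - 1) := by
  unfold Apoly; ring

lemma sq_add_four_mul_sub_one_nonpos_iff {t : ℝ} (ht : 0 ≤ t) :
    t ^ 2 + 4 * t - 1 ≤ 0 ↔ t ≤ Real.sqrt 5 - 2 := by
  have h5 : Real.sqrt 5 ^ 2 = 5 := Real.sq_sqrt (by norm_num)
  have hfac : t ^ 2 + 4 * t - 1 = (t - (Real.sqrt 5 - 2)) * (t + 2 + Real.sqrt 5) := by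
    linear_combination h5
  have hpos : 0 < t + 2 + Real.sqrt 5 := by positivity
  rw [hfac, ← neg_nonneg, ← neg_mul, mul_nonneg_iff_of_pos_right hpos, neg_nonneg, sub_nonpos]

lemma Apoly_zero_left_nonpos_iff {b : ℝ} (hb : 0 < b) (x : ℝ) :
    Apoly 0 b x ≤ 0 ↔ x ^ 2 ≤ (Real.sqrt 5 - 2) / b := by
  have hquartic : b ^ 2 * x ^ 4 + 4 * b * x ^ 2 - 1 = (b * x ^ 2) ^ 2 + 4 * (b * x ^ 2) - 1 := by
    ring
  rw [Apoly_zero_left, ← neg_nonneg, ← mul_neg, mul_nonneg_iff_of_pos_left (by positivity),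
    neg_nonneg, hquartic, sq_add_four_mul_sub_one_nonpos_iff (by positivity), le_div_iff₀ hb,
    mul_comm]

theorem stmt8 (b : ℝ) (hb : 0 < b) :
    (∀ x : ℝ, Apoly 0 b x = 9 * b * (b ^ 2 * x ^ 4 + 4 * b * x ^ 2 - 1)) ∧
    (∀ x : ℝ, Apoly 0 b x ≤ 0 ↔ x ^ 2 ≤ (Real.sqrt 5 - 2) / b) ∧
    (∀ x y : ℝ, |x| ≤ Real.sqrt ((Real.sqrt 5 - 2) / b) → Mq 0 b 0 x y ≤ 0) := by
  refine ⟨Apoly_zero_left b, Apoly_zero_left_nonpos_iff hb, fun x y hx => ?_⟩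
  have hbound : 0 ≤ (Real.sqrt 5 - 2) / b := by
    have : (2 : ℝ) ≤ Real.sqrt 5 := Real.le_sqrt_of_sq_le (by norm_num)
    exact div_nonneg (by linarith) hb.le
  rw [Real.le_sqrt (abs_nonneg x) hbound, sq_abs] at hx
  exact Mq_nonpos_of_Apoly_nonpos ((Apoly_zero_left_nonpos_iff hb x).mpr hx) y
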